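/- arXiv:2007.03003 — 7 statements merged into one kernel-verified Lean document; each statement's English description precedes it below -/
import Mathlib

section
/- There is a bijection between the set of orthocomplementations Ψ on the lattice G(ℝ²) of linear subspaces of ℝ² (ordered by inclusion, with meet the intersection and join the sum) and the set of involutive maps ψ : [0, π) → [0, π) without fixed points; under this bijection Ψ and ψ correspond if and only if Ψ(span{(cos θ, sin θ)}) = span{(cos ψ(θ), sin ψ(θ))} for all θ ∈ [0, π). -/
/-- The line in `ℝ²` spanned by `(cos θ, sin θ)`. -/
noncomputable def line (θ : ℝ) : Submodule ℝ (Fin 2 → ℝ) :=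
  Submodule.span ℝ {![Real.cos θ, Real.sin θ]}

/-- An orthocomplementation on a lattice bounded from below: an antitone, involutive,
separating map. -/
def IsOrthocompl {L : Type*} [Lattice L] [OrderBot L] (Ψ : L → L) : Prop :=
  (∀ a b : L, b ≤ a → Ψ a ≤ Ψ b) ∧ (∀ a : L, Ψ (Ψ a) = a) ∧
  (∀ a b : L, b ≤ a → b ≤ Ψ a → b = ⊥)

/-! Every subspace of `ℝ²` other than `0` and `ℝ²` is a line, so two distinct such subspaces are
incomparable. An orthocomplementation swaps `0` and `ℝ²` and hence permutes the lines by a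
fixed-point-free involution; conversely, in any bounded lattice whose elements other than `⊥`, `⊤`
are atoms, a fixed-point-free involution of those elements, extended by swapping `⊥` and `⊤`, is an
orthocomplementation. Parametrizing lines by their angle in `[0, π)` transports the involution. -/

open Function Real Submodule

section Lattice

variable {L : Type*} [Lattice L] [BoundedOrder L]

lemma eq_of_le_of_ne_bot_of_ne_top (hL : ∀ a : L, a ≠ ⊥ → a ≠ ⊤ → IsAtom a)
    {a b : L} (hba : b ≤ a) (hb : b ≠ ⊥) (ha : a ≠ ⊤) : b = a :=
  ((hL a (ne_bot_of_le_ne_bot hb hba) ha).le_iff.1 hba).resolve_left hb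

namespace IsOrthocompl

variable {Ψ : L → L}

lemma map_bot (hΨ : IsOrthocompl Ψ) : Ψ ⊥ = ⊤ :=
  top_le_iff.1 (hΨ.2.1 ⊤ ▸ hΨ.1 _ _ bot_le)

lemma map_top (hΨ : IsOrthocompl Ψ) : Ψ ⊤ = ⊥ :=
  le_bot_iff.1 (hΨ.2.1 ⊥ ▸ hΨ.1 _ _ le_top)

lemma map_ne_bot (hΨ : IsOrthocompl Ψ) {a : L} (ha : a ≠ ⊤) : Ψ a ≠ ⊥ := fun h =>
  ha (by rw [← hΨ.2.1 a, h, hΨ.map_bot])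

lemma map_ne_top (hΨ : IsOrthocompl Ψ) {a : L} (ha : a ≠ ⊥) : Ψ a ≠ ⊤ := fun h =>
  ha (by rw [← hΨ.2.1 a, h, hΨ.map_top])

lemma map_ne_self (hΨ : IsOrthocompl Ψ) {a : L} (ha : a ≠ ⊥) : Ψ a ≠ a := fun h =>
  ha (hΨ.2.2 a a le_rfl h.ge)

def restrict (hΨ : IsOrthocompl Ψ) :
    {a : L // a ≠ ⊥ ∧ a ≠ ⊤} → {a : L // a ≠ ⊥ ∧ a ≠ ⊤} :=
  fun a => ⟨Ψ a, hΨ.map_ne_bot a.2.2, hΨ.map_ne_top a.2.1⟩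

end IsOrthocompl

open scoped Classical in
noncomputable def orthocomplOfInvolution
    (ψ : {a : L // a ≠ ⊥ ∧ a ≠ ⊤} → {a : L // a ≠ ⊥ ∧ a ≠ ⊤}) (a : L) : L :=
  if ha : a = ⊥ then ⊤ else if ha' : a = ⊤ then ⊥ else ψ ⟨a, ha, ha'⟩

lemma orthocomplOfInvolution_coe
    (ψ : {a : L // a ≠ ⊥ ∧ a ≠ ⊤} → {a : L // a ≠ ⊥ ∧ a ≠ ⊤}) (a : {a : L // a ≠ ⊥ ∧ a ≠ ⊤}) :
    orthocomplOfInvolution ψ a = ψ a := by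
  simp [orthocomplOfInvolution, a.2.1, a.2.2]

@[simp]
lemma orthocomplOfInvolution_bot (ψ : {a : L // a ≠ ⊥ ∧ a ≠ ⊤} → {a : L // a ≠ ⊥ ∧ a ≠ ⊤}) :
    orthocomplOfInvolution ψ ⊥ = ⊤ := by
  simp [orthocomplOfInvolution]

@[simp]
lemma orthocomplOfInvolution_top (ψ : {a : L // a ≠ ⊥ ∧ a ≠ ⊤} → {a : L // a ≠ ⊥ ∧ a ≠ ⊤}) :
    orthocomplOfInvolution ψ ⊤ = ⊥ := by
  by_cases h : (⊤ : L) = ⊥ <;> simp [orthocomplOfInvolution, h]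

lemma isOrthocompl_orthocomplOfInvolution (hL : ∀ a : L, a ≠ ⊥ → a ≠ ⊤ → IsAtom a)
    {ψ : {a : L // a ≠ ⊥ ∧ a ≠ ⊤} → {a : L // a ≠ ⊥ ∧ a ≠ ⊤}}
    (hinv : Involutive ψ) (hfix : ∀ a, ψ a ≠ a) : IsOrthocompl (orthocomplOfInvolution ψ) := by
  refine ⟨fun a b hba => ?_, fun a => ?_, fun a b hba hbΨ => ?_⟩
  · rcases eq_or_ne b ⊥ with rfl | hb
    · simp
    rcases eq_or_ne a ⊤ with rfl | ha
    · simp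
    rw [eq_of_le_of_ne_bot_of_ne_top hL hba hb ha]
  · rcases eq_or_ne a ⊥ with rfl | ha
    · simp
    rcases eq_or_ne a ⊤ with rfl | ha'
    · simp
    lift a to {a : L // a ≠ ⊥ ∧ a ≠ ⊤} using ⟨ha, ha'⟩
    rw [orthocomplOfInvolution_coe, orthocomplOfInvolution_coe, hinv]
  · by_contra hb
    rcases eq_or_ne a ⊤ with rfl | ha
    · exact hb (le_bot_iff.1 (by simpa using hbΨ))
    obtain rfl := eq_of_le_of_ne_bot_of_ne_top hL hba hb ha
    lift b to {a : L // a ≠ ⊥ ∧ a ≠ ⊤} using ⟨hb, ha⟩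
    rw [orthocomplOfInvolution_coe] at hbΨ
    exact hfix b (Subtype.ext (eq_of_le_of_ne_bot_of_ne_top hL hbΨ hb (ψ b).2.2).symm)

noncomputable def orthocomplEquiv (hL : ∀ a : L, a ≠ ⊥ → a ≠ ⊤ → IsAtom a) :
    {Ψ : L → L // IsOrthocompl Ψ} ≃
      {ψ : {a : L // a ≠ ⊥ ∧ a ≠ ⊤} → {a : L // a ≠ ⊥ ∧ a ≠ ⊤} // Involutive ψ ∧ ∀ a, ψ a ≠ a} where
  toFun Ψ := ⟨Ψ.2.restrict, fun a => Subtype.ext (Ψ.2.2.1 a),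
    fun a h => Ψ.2.map_ne_self a.2.1 (congrArg Subtype.val h)⟩
  invFun ψ := ⟨orthocomplOfInvolution ψ.1, isOrthocompl_orthocomplOfInvolution hL ψ.2.1 ψ.2.2⟩
  left_inv Ψ := by
    refine Subtype.ext (funext fun a => ?_)
    rcases eq_or_ne a ⊥ with rfl | ha
    · simp [Ψ.2.map_bot]
    rcases eq_or_ne a ⊤ with rfl | ha'
    · simp [Ψ.2.map_top]
    exact orthocomplOfInvolution_coe _ ⟨a, ha, ha'⟩
  right_inv ψ := Subtype.ext (funext fun a => Subtype.ext (orthocomplOfInvolution_coe _ a))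

end Lattice

def Equiv.fixedPointFreeInvolutionCongr {α β : Type*} (σ : α ≃ β) :
    {f : α → α // Involutive f ∧ ∀ a, f a ≠ a} ≃ {g : β → β // Involutive g ∧ ∀ b, g b ≠ b} :=
  σ.conj.subtypeEquiv fun f => by
    simp only [Involutive, conj_apply, symm_apply_apply, ne_eq, ← σ.eq_symm_apply,
      σ.symm.surjective.forall]

lemma Submodule.isAtom_of_ne_bot_of_ne_top {K V : Type*} [DivisionRing K] [AddCommGroup V]
    [Module K V] [FiniteDimensional K V] (hV : Module.finrank K V = 2) {W : Submodule K V}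
    (hb : W ≠ ⊥) (ht : W ≠ ⊤) : IsAtom W := by
  have hlt := Submodule.finrank_lt ht
  have hne := Submodule.finrank_eq_zero.not.2 hb
  rw [isAtom_iff_finrank_eq_one]
  omega

lemma cos_sin_ne_zero (θ : ℝ) : ![cos θ, sin θ] ≠ 0 := fun h => by
  have hcos : cos θ = 0 := by simpa using congrFun h 0
  have hsin : sin θ = 0 := by simpa using congrFun h 1
  simpa [hcos, hsin] using sin_sq_add_cos_sq θ

lemma finrank_line (θ : ℝ) : Module.finrank ℝ (line θ) = 1 :=
  finrank_span_singleton (cos_sin_ne_zero θ)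

lemma line_ne_bot (θ : ℝ) : line θ ≠ ⊥ :=
  span_singleton_eq_bot.not.2 (cos_sin_ne_zero θ)

lemma line_ne_top (θ : ℝ) : line θ ≠ ⊤ := fun h => by
  have := finrank_line θ
  rw [h, finrank_top, Module.finrank_fin_fun] at this
  norm_num at this

lemma line_periodic : Periodic line π := fun θ => by
  have : ![cos (θ + π), sin (θ + π)] = -![cos θ, sin θ] := by
    ext i; fin_cases i <;> simp
  rw [line, this, ← Set.neg_singleton, span_neg, line]

lemma line_injOn : Set.InjOn line (Set.Ico 0 π) := fun θ hθ θ' hθ' h => by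
  have hmem : ![cos θ', sin θ'] ∈ line θ := h ▸ mem_span_singleton_self _
  obtain ⟨c, hc⟩ := mem_span_singleton.1 hmem
  have hcos : c * cos θ = cos θ' := by simpa using congrFun hc 0
  have hsin : c * sin θ = sin θ' := by simpa using congrFun hc 1
  have hsub : sin (θ' - θ) = 0 := by
    rw [sin_sub, ← hcos, ← hsin]; ring
  have := (sin_eq_zero_iff_of_lt_of_lt (by linarith [hθ.2, hθ'.1]) (by linarith [hθ.1, hθ'.2])).1 hsub
  linarith

lemma span_singleton_eq_line_arg {v : Fin 2 → ℝ} (hv : v ≠ 0) :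
    span ℝ {v} = line (Complex.arg ⟨v 0, v 1⟩) := by
  set z : ℂ := ⟨v 0, v 1⟩
  have hz : ‖z‖ ≠ 0 := by
    refine norm_ne_zero_iff.2 fun hz => hv ?_
    ext i; fin_cases i
    exacts [congrArg Complex.re hz, congrArg Complex.im hz]
  have : v = ‖z‖ • ![cos z.arg, sin z.arg] := by
    ext i; fin_cases i
    exacts [(Complex.norm_mul_cos_arg z).symm, (Complex.norm_mul_sin_arg z).symm]
  rw [line, this, span_singleton_smul_eq (IsUnit.mk0 _ hz)]

lemma exists_mem_Ico_line_eq {W : Submodule ℝ (Fin 2 → ℝ)} (hb : W ≠ ⊥) (ht : W ≠ ⊤) :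
    ∃ θ ∈ Set.Ico 0 π, line θ = W := by
  obtain ⟨v, hv, rfl⟩ := (atom_iff_nonzero_span W).1
    (isAtom_of_ne_bot_of_ne_top (Module.finrank_fin_fun ℝ) hb ht)
  obtain ⟨θ, hθ, h⟩ := line_periodic.exists_mem_Ico₀ pi_pos (Complex.arg ⟨v 0, v 1⟩)
  exact ⟨θ, hθ, by rw [← h, span_singleton_eq_line_arg hv]⟩

noncomputable def lineEquiv : Set.Ico 0 π ≃ {W : Submodule ℝ (Fin 2 → ℝ) // W ≠ ⊥ ∧ W ≠ ⊤} :=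
  Equiv.ofBijective (fun θ => ⟨line θ, line_ne_bot θ, line_ne_top θ⟩)
    ⟨fun θ θ' h => Subtype.ext (line_injOn θ.2 θ'.2 (congrArg Subtype.val h)),
      fun W => by
        obtain ⟨θ, hθ, h⟩ := exists_mem_Ico_line_eq W.2.1 W.2.2
        exact ⟨⟨θ, hθ⟩, Subtype.ext h⟩⟩

/-- Orthocomplementations on `G(ℝ²)` are in one-one correspondence with
involutive fixed-point-free maps `ψ : [0, π) → [0, π)`, `Ψ` and `ψ` corresponding iff
`Ψ(span{(cos θ, sin θ)}) = span{(cos ψ(θ), sin ψ(θ))}` for all `θ`. -/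
theorem stmt_5 :
    ∃ e : {Ψ : Submodule ℝ (Fin 2 → ℝ) → Submodule ℝ (Fin 2 → ℝ) // IsOrthocompl Ψ} ≃
          {ψ : Set.Ico (0 : ℝ) Real.pi → Set.Ico (0 : ℝ) Real.pi //
            (∀ θ, ψ (ψ θ) = θ) ∧ (∀ θ, ψ θ ≠ θ)},
      ∀ Ψ ψ, e Ψ = ψ ↔
        ∀ θ : Set.Ico (0 : ℝ) Real.pi, Ψ.1 (line (θ : ℝ)) = line ((ψ.1 θ : ℝ)) := by
  have hL : ∀ W : Submodule ℝ (Fin 2 → ℝ), W ≠ ⊥ → W ≠ ⊤ → IsAtom W :=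
    fun W => isAtom_of_ne_bot_of_ne_top (Module.finrank_fin_fun ℝ)
  refine ⟨(orthocomplEquiv hL).trans lineEquiv.symm.fixedPointFreeInvolutionCongr,
    fun Ψ ψ => ?_⟩
  -- `e Ψ = ψ` unfolds to `lineEquiv.symm (Ψ (lineEquiv θ)) = ψ θ` for all `θ`
  rw [Subtype.ext_iff, funext_iff]
  exact forall_congr' fun θ => lineEquiv.symm_apply_eq.trans Subtype.ext_iff
end

section
/- Let (L, ≤, ⊤, 0, 1) be a separated locality lattice, and for a ∈ L write grt(a^⊤) for the greatest element of the polar set a^⊤. Then the following two conditions are equivalent: (i) for all a ∈ L, a^⊤ = {0} if and only if a = 1; (ii) the closedness condition: for all a ∈ L, a ∨ grt(a^⊤) = 1. -/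
/-! In a separated locality lattice the polar set of `a ⊔ grt(a^⊤)` is `{0}`: anything local to it is
local to both `a` and `grt(a^⊤)`, hence lies below `grt(a^⊤)` while meeting it trivially. So (i) forces
`a ⊔ grt(a^⊤) = 1`. Conversely, if `a^⊤ = {0}` then `grt(a^⊤) = 0` and closedness gives `a = 1`,
while `1^⊤ = {0}` holds in any separated locality lattice. -/

section LocalityLattice

variable {L : Type*} {T : L → L → Prop}

theorem locality_antitone_left [Preorder L] (hsym : ∀ a b : L, T a b → T b a)
    (hlow : ∀ a : L, IsLowerSet {x | T a x}) {a b x : L} (hab : a ≤ b) (hbx : T b x) : T a x :=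
  hsym x a (hlow x hab (hsym b x hbx))

theorem locality_bot_of_isGreatest [Preorder L] [OrderBot L] {a g : L}
    (hlow : IsLowerSet {x | T a x}) (hg : IsGreatest {x | T a x} g) : T a ⊥ :=
  hlow bot_le hg.1

theorem polar_eq_singleton_bot_iff [Preorder L] [OrderBot L] {a : L} (hbot : T a ⊥) :
    {x | T a x} = ({⊥} : Set L) ↔ ∀ x, T a x → x = ⊥ := by
  rw [Set.eq_singleton_iff_unique_mem]
  exact and_iff_right hbot

variable [Lattice L] [BoundedOrder L]

theorem polar_top_eq_singleton_bot (hsep : ∀ a b : L, T a b → a ⊓ b = ⊥) (hbot : T ⊤ ⊥) :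
    {x | T ⊤ x} = ({⊥} : Set L) :=
  (polar_eq_singleton_bot_iff hbot).2 fun x hx => top_inf_eq x ▸ hsep ⊤ x hx

theorem polar_sup_grt_eq_singleton_bot (hsym : ∀ a b : L, T a b → T b a)
    (hlow : ∀ a : L, IsLowerSet {x | T a x}) (hsep : ∀ a b : L, T a b → a ⊓ b = ⊥)
    {a g : L} (hg : IsGreatest {x | T a x} g) (hbot : T (a ⊔ g) ⊥) :
    {x | T (a ⊔ g) x} = ({⊥} : Set L) := by
  refine (polar_eq_singleton_bot_iff hbot).2 fun x hx => ?_
  have hxg : x ≤ g := hg.2 (locality_antitone_left hsym hlow le_sup_left hx)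
  have hgx : T g x := locality_antitone_left hsym hlow le_sup_right hx
  simpa [inf_eq_right.mpr hxg] using hsep g x hgx

theorem eq_top_of_polar_eq_singleton_bot {a g : L} (hg : IsGreatest {x | T a x} g)
    (hclosed : a ⊔ g = ⊤) (ha : {x | T a x} = ({⊥} : Set L)) : a = ⊤ := by
  have hg_bot : g = ⊥ := by simpa [ha] using hg.1
  simpa [hg_bot] using hclosed

end LocalityLattice

theorem stmt_8_general {L : Type*} [Lattice L] [BoundedOrder L] (T : L → L → Prop)
    (hsym : ∀ a b : L, T a b → T b a)
    (hlow : ∀ a : L, IsLowerSet {x | T a x})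
    (hsep : ∀ a b : L, T a b → a ⊓ b = ⊥)
    (grt : L → L) (hgrt : ∀ a : L, IsGreatest {x | T a x} (grt a)) :
    (∀ a : L, {x | T a x} = ({⊥} : Set L) ↔ a = ⊤) ↔
    (∀ a : L, a ⊔ grt a = ⊤) := by
  have hbot (a : L) : T a ⊥ := locality_bot_of_isGreatest (hlow a) (hgrt a)
  constructor
  · intro h a
    exact (h (a ⊔ grt a)).1 (polar_sup_grt_eq_singleton_bot hsym hlow hsep (hgrt a) (hbot _))
  · intro hclosed a
    refine ⟨eq_top_of_polar_eq_singleton_bot (hgrt a) (hclosed a), ?_⟩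
    rintro rfl
    exact polar_top_eq_singleton_bot hsep (hbot ⊤)

/-- In a separated locality lattice, the condition `a^⊤ = {⊥} ↔ a = ⊤`
is equivalent to the closedness condition `a ⊔ grt(a^⊤) = ⊤`. -/
theorem stmt_8 {L : Type*} [Lattice L] [BoundedOrder L] (T : L → L → Prop)
    (hsym : ∀ a b : L, T a b → T b a)
    (hlow : ∀ a : L, IsLowerSet {x | T a x})
    (hjoin : ∀ a b c : L, T a b → T a c → T a (b ⊔ c))
    (hsep : ∀ a b : L, T a b → a ⊓ b = ⊥)
    (grt : L → L) (hgrt : ∀ a : L, IsGreatest {x | T a x} (grt a)) :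
    (∀ a : L, {x | T a x} = ({⊥} : Set L) ↔ a = ⊤) ↔
    (∀ a : L, a ⊔ grt a = ⊤) :=
  stmt_8_general T hsym hlow hsep grt hgrt
end

section
/- Let (L, ≤, 0, 1) be a bounded lattice and let ⊤ be a strongly separating locality relation on L. Then the map Ψ : L → L defined by Ψ(a) := grt(a^⊤) is an orthocomplementation: it is antitone (b ≤ a implies Ψ(a) ≤ Ψ(b)), involutive (Ψ(Ψ(a)) = a for all a), and separating (b ≤ a and b ≤ Ψ(a) imply b = 0). -/
/-!
Since every polar `a^⊤` is a lower set with greatest element `grt a`, it is the principal ideal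
`↓ grt a`, i.e. `a ⊤ x ↔ x ≤ grt a`. Antitonicity and separation follow from this and symmetry;
for involutivity, `a ≤ grt (grt a)` because `a ⊤ grt a`, while `grt (grt a) ≤ a` because `a` is
the greatest element of the bipolar `(a^⊤)^⊤`, to which `grt (grt a)` belongs.
-/

section LocalityRelation

variable {L : Type*} {T : L → L → Prop} {grt : L → L}

theorem rel_iff_le_grt [Preorder L] (hlow : ∀ a, IsLowerSet {x | T a x})
    (hgrt : ∀ a, IsGreatest {x | T a x} (grt a)) {a x : L} : T a x ↔ x ≤ grt a :=
  ⟨fun h => (hgrt a).2 h, fun h => hlow a h (hgrt a).1⟩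

theorem grt_antitone [Preorder L] (hsym : ∀ a b, T a b → T b a)
    (hlow : ∀ a, IsLowerSet {x | T a x}) (hgrt : ∀ a, IsGreatest {x | T a x} (grt a))
    {a b : L} (hba : b ≤ a) : grt a ≤ grt b := by
  have hgrt_a : T (grt a) a := hsym _ _ (hgrt a).1
  exact (hgrt b).2 (hsym _ _ (hlow (grt a) hba hgrt_a))

theorem grt_grt [PartialOrder L] (hsym : ∀ a b, T a b → T b a)
    (hlow : ∀ a, IsLowerSet {x | T a x}) (hgrt : ∀ a, IsGreatest {x | T a x} (grt a))
    (hstrong : ∀ a, IsGreatest {x | ∀ y, T a y → T y x} a) (a : L) : grt (grt a) = a := by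
  refine le_antisymm ((hstrong a).2 fun y hy => ?_) ((hgrt (grt a)).2 (hsym _ _ (hgrt a).1))
  have hy_le : y ≤ grt a := (rel_iff_le_grt hlow hgrt).1 hy
  exact hsym _ _ (hlow _ hy_le (hsym _ _ (hgrt (grt a)).1))

theorem eq_bot_of_le_of_le_grt [SemilatticeInf L] [OrderBot L] (hsym : ∀ a b, T a b → T b a)
    (hlow : ∀ a, IsLowerSet {x | T a x}) (hsep : ∀ a b, T a b → a ⊓ b = ⊥)
    (hgrt : ∀ a, IsGreatest {x | T a x} (grt a)) {a b : L} (hba : b ≤ a) (hb : b ≤ grt a) :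
    b = ⊥ := by
  have hab : T a b := (rel_iff_le_grt hlow hgrt).2 hb
  have hbb : T b b := hlow b hba (hsym _ _ hab)
  simpa using hsep b b hbb

end LocalityRelation

theorem stmt_11_general {L : Type*} [Lattice L] [BoundedOrder L] (T : L → L → Prop)
    (hsym : ∀ a b : L, T a b → T b a)
    (hlow : ∀ a : L, IsLowerSet {x | T a x})
    (hsep : ∀ a b : L, T a b → a ⊓ b = ⊥)
    (grt : L → L) (hgrt : ∀ a : L, IsGreatest {x | T a x} (grt a))
    (hstrong : ∀ a : L, IsGreatest {x | ∀ y : L, T a y → T y x} a) :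
    (∀ a b : L, b ≤ a → grt a ≤ grt b) ∧
    (∀ a : L, grt (grt a) = a) ∧
    (∀ a b : L, b ≤ a → b ≤ grt a → b = ⊥) :=
  ⟨fun _ _ => grt_antitone hsym hlow hgrt, grt_grt hsym hlow hgrt hstrong,
    fun _ _ => eq_bot_of_le_of_le_grt hsym hlow hsep hgrt⟩

/-- For a strongly separating locality relation on a bounded lattice, the
map `a ↦ grt(a^⊤)` is an orthocomplementation: antitone, involutive and separating. -/
theorem stmt_11 {L : Type*} [Lattice L] [BoundedOrder L] (T : L → L → Prop)
    (hsym : ∀ a b : L, T a b → T b a)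
    (hlow : ∀ a : L, IsLowerSet {x | T a x})
    (hjoin : ∀ a b c : L, T a b → T a c → T a (b ⊔ c))
    (hsep : ∀ a b : L, T a b → a ⊓ b = ⊥)
    (grt : L → L) (hgrt : ∀ a : L, IsGreatest {x | T a x} (grt a))
    (hstrong : ∀ a : L, IsGreatest {x | ∀ y : L, T a y → T y x} a) :
    (∀ a b : L, b ≤ a → grt a ≤ grt b) ∧
    (∀ a : L, grt (grt a) = a) ∧
    (∀ a b : L, b ≤ a → b ≤ grt a → b = ⊥) :=
  stmt_11_general T hsym hlow hsep grt hgrt hstrong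
end

section
/- Let (L, ≤, 0, 1) be a bounded lattice. The assignments F : ⊤ ↦ Ψ^⊤ with Ψ^⊤(a) := grt(a^⊤), and G : Ψ ↦ ⊤_Ψ with a ⊤_Ψ b :⟺ b ≤ Ψ(a), are mutually inverse: (i) for every strongly separating locality relation ⊤ on L and all a, b ∈ L, a ⊤ b if and only if b ≤ grt(a^⊤); (ii) for every orthocomplementation Ψ on L and all a ∈ L, the greatest element of the polar set of a with respect to ⊤_Ψ equals Ψ(a). Hence F and G are mutually inverse bijections between the set of strongly separating locality relations on L and the set of orthocomplementations on L. -/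
/-- A strongly separating locality relation on a bounded lattice. -/
def IsStronglySepLoc {L : Type*} [Lattice L] [BoundedOrder L] (T : L → L → Prop) : Prop :=
  (∀ a b : L, T a b → T b a) ∧
  (∀ a : L, IsLowerSet {x | T a x}) ∧
  (∀ a b c : L, T a b → T a c → T a (b ⊔ c)) ∧
  (∀ a b : L, T a b → a ⊓ b = ⊥) ∧
  (∀ a : L, ∃ g : L, IsGreatest {x | T a x} g) ∧
  (∀ a : L, IsGreatest {x | ∀ y : L, T a y → T y x} a)

/-!
A strongly separating locality relation is determined by its greatest-polar map
`Ψ a = grt(a^⊤)`: since `a^⊤` is a lower set containing `Ψ a`, it is exactly the interval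
`Iic (Ψ a)`. Through this description symmetry of `⊤` becomes antitonicity of `Ψ`, the
bipolar condition `grt(a^⊤⊤) = a` becomes involutivity, and `a ⊤ b → a ⊓ b = ⊥` becomes
separation; each step reverses, so the two structures are in bijection.
-/

section

variable {L : Type*} [Lattice L] [BoundedOrder L]

namespace IsStronglySepLoc

variable {T : L → L → Prop}

theorem iff_le_of_isGreatest (hT : IsStronglySepLoc T) {a b g : L}
    (hg : IsGreatest {x | T a x} g) : T a b ↔ b ≤ g :=
  ⟨fun h => hg.2 h, fun h => hT.2.1 a h hg.1⟩

theorem isOrthocompl_of_isGreatest (hT : IsStronglySepLoc T) {Ψ : L → L}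
    (hΨ : ∀ a, IsGreatest {x | T a x} (Ψ a)) : IsOrthocompl Ψ := by
  have polar_iff (a b : L) : T a b ↔ b ≤ Ψ a := hT.iff_le_of_isGreatest (hΨ a)
  obtain ⟨symm, lower, -, inf_eq_bot, -, bipolar⟩ := hT
  have antitone (a b : L) (hba : b ≤ a) : Ψ a ≤ Ψ b :=
    (polar_iff b _).1 (symm _ _ (lower _ hba (symm _ _ (hΨ a).1)))
  refine ⟨antitone, fun a => le_antisymm ?_ ?_, fun a b hba hb => ?_⟩
  · refine (bipolar a).2 fun y hy => ?_
    exact symm _ _ (lower _ ((polar_iff a y).1 hy) (symm _ _ (hΨ (Ψ a)).1))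
  · exact (hΨ (Ψ a)).2 (symm _ _ (hΨ a).1)
  · simpa [inf_eq_right.2 hba] using inf_eq_bot a b ((polar_iff a b).2 hb)

/-- The map `Ψ^⊤ : a ↦ grt(a^⊤)`. -/
noncomputable def orthocompl (hT : IsStronglySepLoc T) (a : L) : L :=
  (hT.2.2.2.2.1 a).choose

theorem isGreatest_orthocompl (hT : IsStronglySepLoc T) (a : L) :
    IsGreatest {x | T a x} (hT.orthocompl a) :=
  (hT.2.2.2.2.1 a).choose_spec

theorem isOrthocompl_orthocompl (hT : IsStronglySepLoc T) : IsOrthocompl hT.orthocompl :=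
  hT.isOrthocompl_of_isGreatest hT.isGreatest_orthocompl

end IsStronglySepLoc

theorem IsOrthocompl.isStronglySepLoc {Ψ : L → L} (hΨ : IsOrthocompl Ψ) :
    IsStronglySepLoc fun a b => b ≤ Ψ a := by
  obtain ⟨antitone, involutive, separating⟩ := hΨ
  have symm (a b : L) (h : b ≤ Ψ a) : a ≤ Ψ b := involutive a ▸ antitone _ _ h
  refine ⟨symm, fun a _ _ hle hmem => hle.trans hmem, fun a _ _ => sup_le,
    fun a b hb => separating a _ inf_le_left (inf_le_right.trans hb),
    fun a => ⟨Ψ a, isGreatest_Iic⟩, fun a => ⟨symm a, fun x hx => ?_⟩⟩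
  simpa [involutive] using hx (Ψ a) le_rfl

variable (L) in
/-- The bijection `F : ⊤ ↦ Ψ^⊤`, with inverse `G : Ψ ↦ ⊤_Ψ`. -/
noncomputable def stronglySepLocEquivOrthocompl :
    {T : L → L → Prop // IsStronglySepLoc T} ≃ {Ψ : L → L // IsOrthocompl Ψ} where
  toFun T := ⟨T.2.orthocompl, T.2.isOrthocompl_orthocompl⟩
  invFun Ψ := ⟨fun a b => b ≤ Ψ.1 a, Ψ.2.isStronglySepLoc⟩
  left_inv T := Subtype.ext <| funext₂ fun a _ =>
    propext (T.2.iff_le_of_isGreatest (T.2.isGreatest_orthocompl a)).symm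
  right_inv Ψ := Subtype.ext <| funext fun a =>
    (Ψ.2.isStronglySepLoc.isGreatest_orthocompl a).unique isGreatest_Iic

end

/-- The assignments `F : ⊤ ↦ (a ↦ grt(a^⊤))` and `G : Ψ ↦ (a ⊤ b ↔ b ≤ Ψ a)`
are mutually inverse bijections between strongly separating locality relations and
orthocomplementations on a bounded lattice. -/
theorem stmt_13 {L : Type*} [Lattice L] [BoundedOrder L] :
    (∀ T : L → L → Prop, IsStronglySepLoc T →
      ∀ (a b g : L), IsGreatest {x | T a x} g → (T a b ↔ b ≤ g)) ∧
    (∀ Ψ : L → L, IsOrthocompl Ψ → ∀ a : L, IsGreatest {b | b ≤ Ψ a} (Ψ a)) ∧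
    (∃ e : {T : L → L → Prop // IsStronglySepLoc T} ≃ {Ψ : L → L // IsOrthocompl Ψ},
      (∀ (T : {T : L → L → Prop // IsStronglySepLoc T}) (a : L),
        IsGreatest {x | T.1 a x} ((e T).1 a)) ∧
      (∀ (Ψ : {Ψ : L → L // IsOrthocompl Ψ}) (a b : L),
        (e.symm Ψ).1 a b ↔ b ≤ Ψ.1 a)) := by
  exact ⟨fun T hT _ _ _ => hT.iff_le_of_isGreatest, fun _ _ _ => isGreatest_Iic,
    stronglySepLocEquivOrthocompl L, fun T => T.2.isGreatest_orthocompl, fun _ _ _ => Iff.rfl⟩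
end

section
/- Let V be a finite-dimensional vector space over a field K. The map φ sending a vector-space locality relation ⊤_V on V to the relation ⊤_{V,G} on the subspace lattice G(V) defined by U ⊤_{V,G} W ⟺ (u ⊤_V w for all u ∈ U, w ∈ W), and the map ψ sending a lattice locality relation ⊤_G on G(V) satisfying {0}^{⊤_G} = G(V) to the relation ⊤_{G,V} on V defined by v₁ ⊤_{G,V} v₂ ⟺ span{v₁} ⊤_G span{v₂}, are mutually inverse bijections between the set of vector-space locality relations on V and the set of lattice locality relations ⊤_G on G(V) with {0}^{⊤_G} = G(V). -/
/-- A vector-space locality relation: a symmetric relation whose polar sets are linear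
subspaces. -/
def IsVecLoc (K : Type*) {V : Type*} [Field K] [AddCommGroup V] [Module K V]
    (T : V → V → Prop) : Prop :=
  (∀ a b : V, T a b → T b a) ∧
  (∀ X : Set V, ∃ W : Submodule K V, (W : Set V) = {v | ∀ x ∈ X, T x v})

/-- A lattice locality relation: a symmetric relation whose polar sets are lattice
ideals (lower sets closed under binary joins). -/
def IsLatLoc {L : Type*} [Lattice L] (T : L → L → Prop) : Prop :=
  (∀ a b : L, T a b → T b a) ∧
  (∀ a : L, IsLowerSet {x | T a x}) ∧
  (∀ a b c : L, T a b → T a c → T a (b ⊔ c))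

/-!
Polars of a vector-space locality relation are subspaces, so a relation between generators
propagates to their spans; hence `⊤_V` is recovered from `⊤_{V,G}` on lines. Conversely, polars of
a lattice locality relation are ideals, and in finite dimension every subspace is a finite join of
lines, so once `{0}^⊤ = G(V)` a lattice locality relation is determined by its values on lines,
and its restriction to lines has subspaces as polars.
-/

open Submodule

section

variable {K V : Type*} [Field K] [AddCommGroup V] [Module K V]

namespace IsVecLoc

variable {T : V → V → Prop}

theorem forall_mem_span_right (hT : IsVecLoc K T) {X S : Set V}
    (h : ∀ x ∈ X, ∀ s ∈ S, T x s) {v : V} (hv : v ∈ span K S) : ∀ x ∈ X, T x v := by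
  obtain ⟨W, hW⟩ := hT.2 X
  have hSW : S ⊆ W := by
    rw [hW]
    exact fun s hs x hx => h x hx s hs
  have hvW : v ∈ (W : Set V) := span_le.2 hSW hv
  rwa [hW] at hvW

theorem forall_mem_span (hT : IsVecLoc K T) {A B : Set V} (h : ∀ a ∈ A, ∀ b ∈ B, T a b) :
    ∀ u ∈ span K A, ∀ w ∈ span K B, T u w := by
  intro u hu w hw
  have hwA : ∀ a ∈ A, T w a := fun a ha => hT.1 a w (hT.forall_mem_span_right h hw a ha)
  exact hT.1 w u (hT.forall_mem_span_right (X := {w}) (by simpa using hwA) hu w rfl)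

end IsVecLoc

namespace IsLatLoc

section Lattice

variable {L : Type*} [Lattice L] {TG : L → L → Prop}

theorem mono (hTG : IsLatLoc TG) {a a' b b' : L} (h : TG a b) (ha : a' ≤ a) (hb : b' ≤ b) :
    TG a' b' :=
  hTG.1 _ _ (hTG.2.1 _ ha (hTG.1 _ _ (hTG.2.1 _ hb h)))

theorem finset_sup [OrderBot L] (hTG : IsLatLoc TG) {a : L} (h0 : TG a ⊥) {ι : Type*}
    {s : Finset ι} {f : ι → L} (h : ∀ i ∈ s, TG a (f i)) : TG a (s.sup f) :=
  Finset.sup_induction h0 (fun _ hb _ hc => hTG.2.2 a _ _ hb hc) h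

end Lattice

variable {TG : Submodule K V → Submodule K V → Prop}

def spanPolar (hTG : IsLatLoc TG) {a : Submodule K V} (h0 : TG a ⊥) : Submodule K V where
  carrier := {v | TG a (K ∙ v)}
  add_mem' {p q} hp hq := hTG.2.1 a (span_singleton_le_iff_mem _ _ |>.2
    (add_mem_sup (mem_span_singleton_self p) (mem_span_singleton_self q)))
    (hTG.2.2 _ _ _ hp hq)
  zero_mem' := by simpa using h0
  smul_mem' c _ hp := hTG.2.1 a (span_singleton_smul_le K c _) hp

theorem mem_spanPolar (hTG : IsLatLoc TG) {a : Submodule K V} (h0 : TG a ⊥) {v : V} :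
    v ∈ hTG.spanPolar h0 ↔ TG a (K ∙ v) :=
  Iff.rfl

theorem of_forall_span_singleton (hTG : IsLatLoc TG) {a W : Submodule K V} (h0 : TG a ⊥)
    (hW : W.FG) (h : ∀ w ∈ W, TG a (K ∙ w)) : TG a W := by
  obtain ⟨S, rfl⟩ := hW
  rw [span_eq_iSup_of_singleton_spans]
  simp only [Finset.mem_coe]
  rw [← Finset.sup_eq_iSup]
  exact hTG.finset_sup h0 fun w hw => h w (subset_span hw)

end IsLatLoc

variable (K) in
/-- The relation `⊤_{V,G}` induced on subspaces by a relation on vectors. -/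
def subspaceRel (T : V → V → Prop) (U W : Submodule K V) : Prop :=
  ∀ u ∈ U, ∀ w ∈ W, T u w

/-- The relation `⊤_{G,V}` induced on vectors by a relation on subspaces. -/
def spanRel (TG : Submodule K V → Submodule K V → Prop) (v₁ v₂ : V) : Prop :=
  TG (K ∙ v₁) (K ∙ v₂)

theorem IsVecLoc.isLatLoc_subspaceRel {T : V → V → Prop} (hT : IsVecLoc K T) :
    IsLatLoc (subspaceRel K T) := by
  refine ⟨fun U W h w hw u hu => hT.1 _ _ (h u hu w hw),
    fun U W W' hW' h u hu w hw => h u hu w (hW' hw), fun U W W' hW hW' => ?_⟩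
  have h := hT.forall_mem_span (A := U) (B := W ∪ W') fun u hu w hw =>
    hw.elim (hW u hu w) (hW' u hu w)
  simpa only [subspaceRel, span_eq, span_union] using h

theorem IsVecLoc.subspaceRel_bot {T : V → V → Prop} (hT : IsVecLoc K T) (W : Submodule K V) :
    subspaceRel K T ⊥ W := by
  have h := hT.forall_mem_span (A := ∅) (B := W) (by simp)
  simpa only [subspaceRel, span_empty, span_eq] using h

theorem IsLatLoc.isVecLoc_spanRel {TG : Submodule K V → Submodule K V → Prop}
    (hTG : IsLatLoc TG) (h0 : ∀ W, TG ⊥ W) : IsVecLoc K (spanRel TG) := by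
  refine ⟨fun a b => hTG.1 _ _, fun X => ⟨⨅ x ∈ X, hTG.spanPolar (hTG.1 _ _ (h0 (K ∙ x))), ?_⟩⟩
  ext v
  simp [IsLatLoc.mem_spanPolar, spanRel]

theorem IsVecLoc.spanRel_subspaceRel {T : V → V → Prop} (hT : IsVecLoc K T) :
    spanRel (subspaceRel K T) = T := by
  ext v₁ v₂
  refine ⟨fun h => h v₁ (mem_span_singleton_self v₁) v₂ (mem_span_singleton_self v₂),
    fun h => hT.forall_mem_span ?_⟩
  simpa using h

theorem IsLatLoc.subspaceRel_spanRel [FiniteDimensional K V]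
    {TG : Submodule K V → Submodule K V → Prop} (hTG : IsLatLoc TG) (h0 : ∀ W, TG ⊥ W) :
    subspaceRel K (spanRel TG) = TG := by
  have h0' (U : Submodule K V) : TG U ⊥ := hTG.1 _ _ (h0 U)
  ext U W
  refine ⟨fun h => ?_, fun h u hu w hw => ?_⟩
  · refine hTG.of_forall_span_singleton (h0' U) (IsNoetherian.noetherian W) fun w hw => ?_
    exact hTG.1 _ _ <| hTG.of_forall_span_singleton (h0' _) (IsNoetherian.noetherian U)
      fun u hu => hTG.1 _ _ (h u hu w hw)
  · exact hTG.mono h ((span_singleton_le_iff_mem _ _).2 hu) ((span_singleton_le_iff_mem _ _).2 hw)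

variable (K V) in
def vecLocEquivLatLoc [FiniteDimensional K V] :
    {T : V → V → Prop // IsVecLoc K T} ≃
      {TG : Submodule K V → Submodule K V → Prop // IsLatLoc TG ∧ ∀ W, TG ⊥ W} where
  toFun T := ⟨subspaceRel K T.1, T.2.isLatLoc_subspaceRel, T.2.subspaceRel_bot⟩
  invFun TG := ⟨spanRel TG.1, TG.2.1.isVecLoc_spanRel TG.2.2⟩
  left_inv T := Subtype.ext T.2.spanRel_subspaceRel
  right_inv TG := Subtype.ext (TG.2.1.subspaceRel_spanRel TG.2.2)

end

/-- For a finite-dimensional vector space `V` over `K`, the maps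
`⊤_V ↦ ⊤_{V,G}` and `⊤_G ↦ ⊤_{G,V}` are mutually inverse bijections between
vector-space locality relations on `V` and lattice locality relations on `G(V)`
satisfying `{0}^⊤ = G(V)`. -/
theorem stmt_15 {K V : Type*} [Field K] [AddCommGroup V] [Module K V]
    [FiniteDimensional K V] :
    ∃ e : {T : V → V → Prop // IsVecLoc K T} ≃
          {TG : Submodule K V → Submodule K V → Prop //
            IsLatLoc TG ∧ ∀ W : Submodule K V, TG ⊥ W},
      (∀ (T : {T : V → V → Prop // IsVecLoc K T}) (U W : Submodule K V),
        (e T).1 U W ↔ ∀ u ∈ U, ∀ w ∈ W, T.1 u w) ∧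
      (∀ (TG : {TG : Submodule K V → Submodule K V → Prop //
            IsLatLoc TG ∧ ∀ W : Submodule K V, TG ⊥ W}) (v₁ v₂ : V),
        (e.symm TG).1 v₁ v₂ ↔ TG.1 (Submodule.span K {v₁}) (Submodule.span K {v₂})) :=
  ⟨vecLocEquivLatLoc K V, fun _ _ _ => Iff.rfl, fun _ _ _ => Iff.rfl⟩
end

section
/- Let V be a finite-dimensional vector space over a field K and ⊤ a strongly non-degenerate vector-space locality relation on V. Then for every linear subspace U of V one has V = U ⊕ U^⊤, i.e., U + U^⊤ = V and U ∩ U^⊤ = {0}. -/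
/-!
If `U + U^⊤` were a proper subspace, strong non-degeneracy would give a nonzero `w` with
`(U + U^⊤) ⊤ w`. In particular `U ⊤ w`, so `w ∈ U^⊤ ⊆ U + U^⊤` and hence `w ⊤ w`, contradicting
non-degeneracy. Non-degeneracy alone also makes `U ∩ U^⊤` trivial.
-/

namespace LocalityRelation

variable {V : Type*} (T : V → V → Prop)

def polar (X : Set V) : Set V := {v | ∀ x ∈ X, T x v}

variable {T}

theorem polar_anti {X Y : Set V} (hXY : X ⊆ Y) : polar T Y ⊆ polar T X :=
  fun _ hv x hx => hv x (hXY hx)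

theorem eq_zero_of_mem_polar_of_mem [Zero V] (hnd : ∀ v : V, T v v → v = 0) {X : Set V} {v : V}
    (hvX : v ∈ X) (hv : v ∈ polar T X) : v = 0 :=
  hnd v (hv v hvX)

variable {K : Type*} [Semiring K] [AddCommMonoid V] [Module K V]

theorem exists_ne_zero_mem_polar
    (hsub : ∀ X : Set V, ∃ W : Submodule K V, (W : Set V) = polar T X)
    (hsnd : ∀ U : Submodule K V, U ≠ ⊤ → polar T U ≠ ({0} : Set V))
    {U : Submodule K V} (hU : U ≠ ⊤) : ∃ w ∈ polar T U, w ≠ 0 := by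
  obtain ⟨Q, hQ⟩ := hsub U
  have hQ_ne_bot : Q ≠ ⊥ := by
    rintro rfl
    exact hsnd U hU (by rw [← hQ, Submodule.bot_coe])
  obtain ⟨w, hwQ, hw⟩ := Submodule.exists_mem_ne_zero_of_ne_bot hQ_ne_bot
  exact ⟨w, hQ ▸ hwQ, hw⟩

theorem sup_eq_top_of_coe_eq_polar
    (hsub : ∀ X : Set V, ∃ W : Submodule K V, (W : Set V) = polar T X)
    (hnd : ∀ v : V, T v v → v = 0)
    (hsnd : ∀ U : Submodule K V, U ≠ ⊤ → polar T U ≠ ({0} : Set V))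
    {U P : Submodule K V} (hP : (P : Set V) = polar T U) : U ⊔ P = ⊤ := by
  by_contra hne
  obtain ⟨w, hw, hw0⟩ := exists_ne_zero_mem_polar hsub hsnd hne
  have hwP : w ∈ P := by
    rw [← SetLike.mem_coe, hP]
    exact polar_anti (fun u hu => Submodule.mem_sup_left hu) hw
  exact hw0 (eq_zero_of_mem_polar_of_mem hnd (Submodule.mem_sup_right hwP) hw)

end LocalityRelation

theorem stmt_16_general {K V : Type*} [Field K] [AddCommGroup V] [Module K V]
    (T : V → V → Prop)
    (hsub : ∀ X : Set V, ∃ W : Submodule K V, (W : Set V) = {v | ∀ x ∈ X, T x v})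
    (hnd : ∀ v : V, T v v → v = 0)
    (hsnd : ∀ U : Submodule K V, U ≠ ⊤ → {v : V | ∀ u ∈ U, T u v} ≠ ({0} : Set V)) :
    ∀ U : Submodule K V,
      (∀ v : V, ∃ u ∈ U, ∃ w ∈ {x : V | ∀ y ∈ U, T y x}, v = u + w) ∧
      (∀ v ∈ U, (∀ y ∈ U, T y v) → v = 0) := by
  intro U
  obtain ⟨P, hP⟩ := hsub U
  have hsup : U ⊔ P = ⊤ := LocalityRelation.sup_eq_top_of_coe_eq_polar hsub hnd hsnd hP
  refine ⟨fun v => ?_, fun v hv hvU => LocalityRelation.eq_zero_of_mem_polar_of_mem hnd hv hvU⟩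
  obtain ⟨u, hu, w, hw, huw⟩ := Submodule.mem_sup.mp (hsup ▸ Submodule.mem_top (x := v))
  exact ⟨u, hu, w, hP ▸ hw, huw.symm⟩

/-- For a strongly non-degenerate vector-space locality relation `T` on a
finite-dimensional vector space `V`, every linear subspace `U` satisfies
`V = U ⊕ U^⊤`: `U + U^⊤ = V` and `U ∩ U^⊤ = {0}`. -/
theorem stmt_16 {K V : Type*} [Field K] [AddCommGroup V] [Module K V]
    [FiniteDimensional K V] (T : V → V → Prop)
    (hsym : ∀ a b : V, T a b → T b a)
    (hsub : ∀ X : Set V, ∃ W : Submodule K V, (W : Set V) = {v | ∀ x ∈ X, T x v})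
    (hnd : ∀ v : V, T v v → v = 0)
    (hsnd : ∀ U : Submodule K V, U ≠ ⊤ → {v : V | ∀ u ∈ U, T u v} ≠ ({0} : Set V)) :
    ∀ U : Submodule K V,
      (∀ v : V, ∃ u ∈ U, ∃ w ∈ {x : V | ∀ y ∈ U, T y x}, v = u + w) ∧
      (∀ v ∈ U, (∀ y ∈ U, T y v) → v = 0) :=
  stmt_16_general T hsub hnd hsnd
end

section
/- Let V be a vector space over a field K admitting a countable basis, and let ⊤ be a strongly non-degenerate vector-space locality relation on V. Then V has a locality basis for ⊤: there exists a basis (u_n) of V such that u_i ⊤ u_j for all indices i ≠ j. -/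
/-!
By Zorn's lemma there is a maximal set `S` of nonzero, pairwise related vectors. Its span is
everything: otherwise strong non-degeneracy yields a nonzero vector related to all of `span S`,
which could be added to `S`. It is linearly independent: if `s ∈ S` lay in the span of the
rest of `S`, then, the polar of `{s}` being a subspace, `s ⊤ s`, so `s = 0`. Hence `S` is a
locality basis; as any two bases have equinumerous index types, it can be indexed by `ι`.
-/

open Submodule Set

section LocalityRelation

variable {K V : Type*} [Field K] [AddCommGroup V] [Module K V] {T : V → V → Prop}

theorem rel_of_mem_span
    (hsub : ∀ X : Set V, ∃ W : Submodule K V, (W : Set V) = {v | ∀ x ∈ X, T x v})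
    {x v : V} {Y : Set V} (h : ∀ y ∈ Y, T x y) (hv : v ∈ span K Y) : T x v := by
  obtain ⟨W, hW⟩ := hsub {x}
  have hYW : Y ⊆ W := fun y hy => (Set.ext_iff.1 hW y).2 (by rintro _ rfl; exact h y hy)
  exact (Set.ext_iff.1 hW v).1 (span_le.2 hYW hv) x rfl

theorem linearIndependent_of_pairwise_rel
    (hsub : ∀ X : Set V, ∃ W : Submodule K V, (W : Set V) = {v | ∀ x ∈ X, T x v})
    (hnd : ∀ v : V, T v v → v = 0)
    {ι : Type*} {u : ι → V} (hrel : Pairwise fun i j => T (u i) (u j)) (hu : ∀ i, u i ≠ 0) :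
    LinearIndependent K u := by
  refine linearIndependent_iff_notMem_span.2 fun i hi => hu i (hnd _ ?_)
  refine rel_of_mem_span hsub ?_ hi
  rintro _ ⟨j, hj, rfl⟩
  exact hrel (Ne.symm hj.2)

theorem exists_maximal_pairwise_rel_ne_zero (T : V → V → Prop) :
    ∃ S : Set V, Maximal (fun S : Set V => S.Pairwise T ∧ 0 ∉ S) S := by
  refine zorn_subset _ fun c hc hchain =>
    ⟨⋃₀ c, ⟨?_, ?_⟩, fun s hs => subset_sUnion_of_mem hs⟩
  · exact hchain.pairwise_sUnion.2 fun s hs => (hc hs).1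
  · rintro ⟨s, hs, h0⟩
    exact (hc hs).2 h0

theorem span_eq_top_of_maximal_pairwise_rel
    (hsym : ∀ a b : V, T a b → T b a)
    (hsub : ∀ X : Set V, ∃ W : Submodule K V, (W : Set V) = {v | ∀ x ∈ X, T x v})
    (hnd : ∀ v : V, T v v → v = 0)
    (hsnd : ∀ U : Submodule K V, U ≠ ⊤ → {v : V | ∀ u ∈ U, T u v} ≠ ({0} : Set V))
    {S : Set V} (hS : Maximal (fun S : Set V => S.Pairwise T ∧ 0 ∉ S) S) :
    span K S = ⊤ := by
  by_contra hne
  obtain ⟨W, hW⟩ := hsub (span K S)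
  obtain ⟨v, hvW, hv0⟩ : ∃ v ∈ W, v ≠ 0 := by
    by_contra! h
    exact hsnd _ hne (hW ▸ (eq_singleton_iff_unique_mem.2 ⟨W.zero_mem, h⟩))
  have hv : ∀ u ∈ span K S, T u v := (Set.ext_iff.1 hW v).1 hvW
  have hvS : v ∉ S := fun h => hv0 (hnd v (hv v (subset_span h)))
  have hins : (insert v S).Pairwise T ∧ 0 ∉ insert v S := by
    refine ⟨hS.1.1.insert fun s hs _ => ?_, ?_⟩
    · have hsv := hv s (subset_span hs)
      exact ⟨hsym _ _ hsv, hsv⟩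
    · rintro (h | h)
      exacts [hv0 h.symm, hS.1.2 h]
  exact hvS (hS.2 hins (subset_insert v S) (mem_insert v S))

end LocalityRelation

theorem stmt_18_general {K V : Type*} [Field K] [AddCommGroup V] [Module K V]
    (ι : Type) (b : Module.Basis ι K V)
    (T : V → V → Prop)
    (hsym : ∀ a b : V, T a b → T b a)
    (hsub : ∀ X : Set V, ∃ W : Submodule K V, (W : Set V) = {v | ∀ x ∈ X, T x v})
    (hnd : ∀ v : V, T v v → v = 0)
    (hsnd : ∀ U : Submodule K V, U ≠ ⊤ → {v : V | ∀ u ∈ U, T u v} ≠ ({0} : Set V)) :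
    ∃ (κ : Type) (c : Module.Basis κ K V), ∀ i j : κ, i ≠ j → T (c i) (c j) := by
  obtain ⟨S, hS⟩ := exists_maximal_pairwise_rel_ne_zero T
  have hrel : Pairwise fun s t : S => T s t :=
    fun s t hst => hS.1.1 s.2 t.2 (Subtype.coe_ne_coe.2 hst)
  have hli : LinearIndependent K ((↑) : S → V) :=
    linearIndependent_of_pairwise_rel hsub hnd hrel fun s h => hS.1.2 (h ▸ s.2)
  let c := Module.Basis.mk hli
    (by rw [Subtype.range_coe, span_eq_top_of_maximal_pairwise_rel hsym hsub hnd hsnd hS])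
  refine ⟨ι, c.reindex (c.indexEquiv b), fun i j hij => ?_⟩
  simp only [Module.Basis.reindex_apply, c, Module.Basis.mk_apply]
  exact hrel ((c.indexEquiv b).symm.injective.ne hij)

/-- A vector space with a countable basis equipped with a strongly
non-degenerate vector-space locality relation admits a locality basis: a basis whose
members are pairwise related by the relation. -/
theorem stmt_18 {K V : Type*} [Field K] [AddCommGroup V] [Module K V]
    (ι : Type) [Countable ι] (b : Module.Basis ι K V)
    (T : V → V → Prop)
    (hsym : ∀ a b : V, T a b → T b a)
    (hsub : ∀ X : Set V, ∃ W : Submodule K V, (W : Set V) = {v | ∀ x ∈ X, T x v})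
    (hnd : ∀ v : V, T v v → v = 0)
    (hsnd : ∀ U : Submodule K V, U ≠ ⊤ → {v : V | ∀ u ∈ U, T u v} ≠ ({0} : Set V)) :
    ∃ (κ : Type) (c : Module.Basis κ K V), ∀ i j : κ, i ≠ j → T (c i) (c j) :=
  stmt_18_general ι b T hsym hsub hnd hsnd
end
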